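/- Let Ω ⊆ ℂ be open and let h : Ω → Matrix N N ℂ be smooth with h(z)ᴴ h(z) = I for all z ∈ Ω (h is unitary-matrix valued), and define χ := ½ h⁻¹ ∂_z h. Then h satisfies the harmonic map equation ∂_z(h⁻¹ ∂_z̄ h) + ∂_z̄(h⁻¹ ∂_z h) = 0 on Ω if and only if χ satisfies the single equation ∂_z̄ χ = [χᴴ, χ] on Ω. -/

import Mathlib

open Complex Matrix

noncomputable section

/-- Wirtinger derivative `∂_z` of a ℂ-valued function of one complex variable,
viewed as a function of two real variables:  `∂_z F = ½(∂_x F − i ∂_y F)`. -/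
def wdz (f : ℂ → ℂ) (z : ℂ) : ℂ :=
  (1 / 2 : ℂ) * (fderiv ℝ f z 1 - Complex.I * fderiv ℝ f z Complex.I)

/-- Wirtinger derivative `∂_z̄ F = ½(∂_x F + i ∂_y F)`. -/
def wdzbar (f : ℂ → ℂ) (z : ℂ) : ℂ :=
  (1 / 2 : ℂ) * (fderiv ℝ f z 1 + Complex.I * fderiv ℝ f z Complex.I)

-- congruence
lemma wdz_congr {f g : ℂ → ℂ} {z : ℂ} (h : f =ᶠ[nhds z] g) : wdz f z = wdz g z := by
  unfold wdz; rw [h.fderiv_eq]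

lemma wdzbar_congr {f g : ℂ → ℂ} {z : ℂ} (h : f =ᶠ[nhds z] g) : wdzbar f z = wdzbar g z := by
  unfold wdzbar; rw [h.fderiv_eq]

lemma wdz_const (c : ℂ) (z : ℂ) : wdz (fun _ => c) z = 0 := by
  unfold wdz; simp [fderiv_const]

lemma wdzbar_const (c : ℂ) (z : ℂ) : wdzbar (fun _ => c) z = 0 := by
  unfold wdzbar; simp [fderiv_const]

lemma wdz_mul {f g : ℂ → ℂ} {z : ℂ} (hf : DifferentiableAt ℝ f z)
    (hg : DifferentiableAt ℝ g z) :
    wdz (fun w => f w * g w) z = wdz f z * g z + f z * wdz g z := by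
  unfold wdz
  rw [fderiv_fun_mul hf hg]
  simp only [ContinuousLinearMap.add_apply, ContinuousLinearMap.smul_apply, smul_eq_mul]
  ring

lemma wdzbar_mul {f g : ℂ → ℂ} {z : ℂ} (hf : DifferentiableAt ℝ f z)
    (hg : DifferentiableAt ℝ g z) :
    wdzbar (fun w => f w * g w) z = wdzbar f z * g z + f z * wdzbar g z := by
  unfold wdzbar
  rw [fderiv_fun_mul hf hg]
  simp only [ContinuousLinearMap.add_apply, ContinuousLinearMap.smul_apply, smul_eq_mul]
  ring

lemma wdzbar_const_mul {f : ℂ → ℂ} {z : ℂ} (hf : DifferentiableAt ℝ f z) (c : ℂ) :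
    wdzbar (fun w => c * f w) z = c * wdzbar f z := by
  unfold wdzbar
  rw [fderiv_const_mul hf c]
  simp only [ContinuousLinearMap.smul_apply, smul_eq_mul]
  ring

lemma wdz_sum {ι : Type*} (s : Finset ι) {f : ι → ℂ → ℂ} {z : ℂ}
    (hf : ∀ i ∈ s, DifferentiableAt ℝ (f i) z) :
    wdz (fun w => ∑ i ∈ s, f i w) z = ∑ i ∈ s, wdz (f i) z := by
  unfold wdz
  rw [fderiv_fun_sum hf]
  simp only [ContinuousLinearMap.coe_sum', Finset.sum_apply]
  rw [Finset.mul_sum, ← Finset.sum_sub_distrib, Finset.mul_sum]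

lemma wdzbar_sum {ι : Type*} (s : Finset ι) {f : ι → ℂ → ℂ} {z : ℂ}
    (hf : ∀ i ∈ s, DifferentiableAt ℝ (f i) z) :
    wdzbar (fun w => ∑ i ∈ s, f i w) z = ∑ i ∈ s, wdzbar (f i) z := by
  unfold wdzbar
  rw [fderiv_fun_sum hf]
  simp only [ContinuousLinearMap.coe_sum', Finset.sum_apply]
  rw [Finset.mul_sum, ← Finset.sum_add_distrib, Finset.mul_sum]

-- conjugation
lemma fderiv_conj_apply {f : ℂ → ℂ} {z : ℂ} (hf : DifferentiableAt ℝ f z) (v : ℂ) :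
    fderiv ℝ (fun w => (starRingEnd ℂ) (f w)) z v = (starRingEnd ℂ) (fderiv ℝ f z v) := by
  have h1 : HasFDerivAt (fun w => Complex.conjCLE.toContinuousLinearMap (f w))
      (Complex.conjCLE.toContinuousLinearMap.comp (fderiv ℝ f z)) z :=
    Complex.conjCLE.toContinuousLinearMap.hasFDerivAt.comp z hf.hasFDerivAt
  have h2 : (fun w => Complex.conjCLE.toContinuousLinearMap (f w))
      = fun w => (starRingEnd ℂ) (f w) := by
    funext w; simp [Complex.conjCLE]
  rw [h2] at h1
  rw [h1.fderiv]
  simp [Complex.conjCLE]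

lemma diffAt_conj {f : ℂ → ℂ} {z : ℂ} (hf : DifferentiableAt ℝ f z) :
    DifferentiableAt ℝ (fun w => (starRingEnd ℂ) (f w)) z := by
  have h1 : HasFDerivAt (fun w => Complex.conjCLE.toContinuousLinearMap (f w))
      (Complex.conjCLE.toContinuousLinearMap.comp (fderiv ℝ f z)) z :=
    Complex.conjCLE.toContinuousLinearMap.hasFDerivAt.comp z hf.hasFDerivAt
  have h2 : (fun w => Complex.conjCLE.toContinuousLinearMap (f w))
      = fun w => (starRingEnd ℂ) (f w) := by
    funext w; simp [Complex.conjCLE]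
  rw [h2] at h1
  exact h1.differentiableAt

lemma wdz_conj {f : ℂ → ℂ} {z : ℂ} (hf : DifferentiableAt ℝ f z) :
    wdz (fun w => (starRingEnd ℂ) (f w)) z = (starRingEnd ℂ) (wdzbar f z) := by
  unfold wdz wdzbar
  rw [fderiv_conj_apply hf, fderiv_conj_apply hf]
  simp only [_root_.map_mul, map_add, Complex.conj_I]
  rw [show (starRingEnd ℂ) (1/2 : ℂ) = 1/2 by simp [Complex.ext_iff]]
  ring

lemma wdzbar_conj {f : ℂ → ℂ} {z : ℂ} (hf : DifferentiableAt ℝ f z) :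
    wdzbar (fun w => (starRingEnd ℂ) (f w)) z = (starRingEnd ℂ) (wdz f z) := by
  unfold wdz wdzbar
  rw [fderiv_conj_apply hf, fderiv_conj_apply hf]
  simp only [_root_.map_mul, map_sub, Complex.conj_I]
  rw [show (starRingEnd ℂ) (1/2 : ℂ) = 1/2 by simp [Complex.ext_iff]]
  ring

section second
variable {f : ℂ → ℂ} {z : ℂ}

lemma fderiv_diffAt (hf : ContDiffAt ℝ (⊤ : ℕ∞) f z) : DifferentiableAt ℝ (fderiv ℝ f) z := by
  have := hf.fderiv_right (m := 1) (WithTop.coe_le_coe.mpr le_top)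
  exact this.differentiableAt one_ne_zero

lemma apply_diffAt (hf : ContDiffAt ℝ (⊤ : ℕ∞) f z) (v : ℂ) :
    DifferentiableAt ℝ (fun w => fderiv ℝ f w v) z :=
  (fderiv_diffAt hf).clm_apply (differentiableAt_const v)

lemma wdz_diffAt (hf : ContDiffAt ℝ (⊤ : ℕ∞) f z) : DifferentiableAt ℝ (fun w => wdz f w) z := by
  have : (fun w => wdz f w) =
      fun w => (1/2 : ℂ) * (fderiv ℝ f w 1 - Complex.I * fderiv ℝ f w Complex.I) := rfl
  rw [this]
  exact (((apply_diffAt hf 1).sub ((apply_diffAt hf Complex.I).const_mul _)).const_mul _)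

lemma wdzbar_diffAt (hf : ContDiffAt ℝ (⊤ : ℕ∞) f z) : DifferentiableAt ℝ (fun w => wdzbar f w) z := by
  have : (fun w => wdzbar f w) =
      fun w => (1/2 : ℂ) * (fderiv ℝ f w 1 + Complex.I * fderiv ℝ f w Complex.I) := rfl
  rw [this]
  exact (((apply_diffAt hf 1).add ((apply_diffAt hf Complex.I).const_mul _)).const_mul _)

lemma fderiv_apply_eq (hf : ContDiffAt ℝ (⊤ : ℕ∞) f z) (v u : ℂ) :
    fderiv ℝ (fun w => fderiv ℝ f w v) z u = fderiv ℝ (fderiv ℝ f) z u v := by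
  rw [fderiv_clm_apply (fderiv_diffAt hf) (differentiableAt_const v)]
  simp

lemma wdz_wdzbar_comm (hf : ContDiffAt ℝ (⊤ : ℕ∞) f z) :
    wdz (fun w => wdzbar f w) z = wdzbar (fun w => wdz f w) z := by
  have symm : IsSymmSndFDerivAt ℝ f z := hf.isSymmSndFDerivAt (by rw [minSmoothness_of_isRCLikeNormedField]; exact WithTop.coe_le_coe.mpr le_top)
  have hbar : ∀ u : ℂ, fderiv ℝ (fun w => wdzbar f w) z u
      = (1/2 : ℂ) * (fderiv ℝ (fderiv ℝ f) z u 1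
          + Complex.I * fderiv ℝ (fderiv ℝ f) z u Complex.I) := by
    intro u
    have e : (fun w => wdzbar f w) =
        fun w => (1/2 : ℂ) * (fderiv ℝ f w 1 + Complex.I * fderiv ℝ f w Complex.I) := rfl
    rw [e, fderiv_const_mul ((apply_diffAt hf 1).fun_add
        ((apply_diffAt hf Complex.I).const_mul _)) _,
      fderiv_fun_add (apply_diffAt hf 1) ((apply_diffAt hf Complex.I).const_mul _),
      fderiv_const_mul (apply_diffAt hf Complex.I) _]
    simp only [ContinuousLinearMap.smul_apply, ContinuousLinearMap.add_apply, smul_eq_mul]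
    rw [fderiv_apply_eq hf 1 u, fderiv_apply_eq hf Complex.I u]
  have hz : ∀ u : ℂ, fderiv ℝ (fun w => wdz f w) z u
      = (1/2 : ℂ) * (fderiv ℝ (fderiv ℝ f) z u 1
          - Complex.I * fderiv ℝ (fderiv ℝ f) z u Complex.I) := by
    intro u
    have e : (fun w => wdz f w) =
        fun w => (1/2 : ℂ) * (fderiv ℝ f w 1 - Complex.I * fderiv ℝ f w Complex.I) := rfl
    rw [e, fderiv_const_mul ((apply_diffAt hf 1).fun_sub
        ((apply_diffAt hf Complex.I).const_mul _)) _,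
      fderiv_fun_sub (apply_diffAt hf 1) ((apply_diffAt hf Complex.I).const_mul _),
      fderiv_const_mul (apply_diffAt hf Complex.I) _]
    simp only [ContinuousLinearMap.smul_apply, ContinuousLinearMap.sub_apply, smul_eq_mul]
    rw [fderiv_apply_eq hf 1 u, fderiv_apply_eq hf Complex.I u]
  rw [show wdz (fun w => wdzbar f w) z = (1/2 : ℂ) * (fderiv ℝ (fun w => wdzbar f w) z 1
        - Complex.I * fderiv ℝ (fun w => wdzbar f w) z Complex.I) from rfl,
    show wdzbar (fun w => wdz f w) z = (1/2 : ℂ) * (fderiv ℝ (fun w => wdz f w) z 1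
        + Complex.I * fderiv ℝ (fun w => wdz f w) z Complex.I) from rfl,
    hbar 1, hbar Complex.I, hz 1, hz Complex.I, symm 1 Complex.I]
  ring

end second

/-- Entrywise Wirtinger derivative `∂_z` for matrix-valued functions. -/
def mdz {n m : Type*} (F : ℂ → Matrix n m ℂ) (z : ℂ) : Matrix n m ℂ :=
  Matrix.of fun i j => wdz (fun w => F w i j) z

/-- Entrywise Wirtinger derivative `∂_z̄` for matrix-valued functions. -/
def mdzbar {n m : Type*} (F : ℂ → Matrix n m ℂ) (z : ℂ) : Matrix n m ℂ :=
  Matrix.of fun i j => wdzbar (fun w => F w i j) z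

def MDiffAt {n m : Type*} (F : ℂ → Matrix n m ℂ) (z : ℂ) : Prop :=
  ∀ i j, DifferentiableAt ℝ (fun w => F w i j) z

section matrixlemmas
variable {n m p : Type*} {z : ℂ}

lemma MDiffAt.mul [Fintype m] {F : ℂ → Matrix n m ℂ} {G : ℂ → Matrix m p ℂ}
    (hF : MDiffAt F z) (hG : MDiffAt G z) : MDiffAt (fun w => F w * G w) z := by
  intro i j
  simp only [Matrix.mul_apply]
  exact DifferentiableAt.fun_sum fun k _ => (hF i k).fun_mul (hG k j)

lemma MDiffAt.conjT {F : ℂ → Matrix n m ℂ} (hF : MDiffAt F z) :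
    MDiffAt (fun w => (F w)ᴴ) z := by
  intro i j
  simp only [Matrix.conjTranspose_apply]
  exact diffAt_conj (hF j i)

lemma mdz_congr {F G : ℂ → Matrix n m ℂ} (h : F =ᶠ[nhds z] G) : mdz F z = mdz G z := by
  ext i j
  exact wdz_congr (h.mono fun w hw => by simp only [hw])

lemma mdzbar_congr {F G : ℂ → Matrix n m ℂ} (h : F =ᶠ[nhds z] G) :
    mdzbar F z = mdzbar G z := by
  ext i j
  exact wdzbar_congr (h.mono fun w hw => by simp only [hw])

lemma mdz_const (X : Matrix n m ℂ) : mdz (fun _ => X) z = 0 := by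
  ext i j
  exact wdz_const _ _

lemma mdzbar_const (X : Matrix n m ℂ) : mdzbar (fun _ => X) z = 0 := by
  ext i j
  exact wdzbar_const _ _

lemma mdz_mul [Fintype m] {F : ℂ → Matrix n m ℂ} {G : ℂ → Matrix m p ℂ}
    (hF : MDiffAt F z) (hG : MDiffAt G z) :
    mdz (fun w => F w * G w) z = mdz F z * G z + F z * mdz G z := by
  ext i j
  show wdz (fun w => (F w * G w) i j) z = _
  have e : (fun w => (F w * G w) i j) = fun w => ∑ k, F w i k * G w k j := by
    funext w; simp [Matrix.mul_apply]
  rw [e, wdz_sum _ (fun k _ => (hF i k).fun_mul (hG k j))]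
  rw [Finset.sum_congr rfl fun k _ => wdz_mul (hF i k) (hG k j), Finset.sum_add_distrib]
  simp [Matrix.add_apply, Matrix.mul_apply, mdz]

lemma mdzbar_mul [Fintype m] {F : ℂ → Matrix n m ℂ} {G : ℂ → Matrix m p ℂ}
    (hF : MDiffAt F z) (hG : MDiffAt G z) :
    mdzbar (fun w => F w * G w) z = mdzbar F z * G z + F z * mdzbar G z := by
  ext i j
  show wdzbar (fun w => (F w * G w) i j) z = _
  have e : (fun w => (F w * G w) i j) = fun w => ∑ k, F w i k * G w k j := by
    funext w; simp [Matrix.mul_apply]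
  rw [e, wdzbar_sum _ (fun k _ => (hF i k).fun_mul (hG k j))]
  rw [Finset.sum_congr rfl fun k _ => wdzbar_mul (hF i k) (hG k j), Finset.sum_add_distrib]
  simp [Matrix.add_apply, Matrix.mul_apply, mdzbar]

lemma mdz_conjT {F : ℂ → Matrix n m ℂ} (hF : MDiffAt F z) :
    mdz (fun w => (F w)ᴴ) z = (mdzbar F z)ᴴ := by
  ext i j
  show wdz (fun w => (starRingEnd ℂ) (F w j i)) z = (starRingEnd ℂ) (wdzbar (fun w => F w j i) z)
  exact wdz_conj (hF j i)

lemma mdzbar_conjT {F : ℂ → Matrix n m ℂ} (hF : MDiffAt F z) :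
    mdzbar (fun w => (F w)ᴴ) z = (mdz F z)ᴴ := by
  ext i j
  show wdzbar (fun w => (starRingEnd ℂ) (F w j i)) z = (starRingEnd ℂ) (wdz (fun w => F w j i) z)
  exact wdzbar_conj (hF j i)

lemma mdzbar_smul {F : ℂ → Matrix n m ℂ} (hF : MDiffAt F z) (c : ℂ) :
    mdzbar (fun w => c • F w) z = c • mdzbar F z := by
  ext i j
  show wdzbar (fun w => c * F w i j) z = c * wdzbar (fun w => F w i j) z
  exact wdzbar_const_mul (hF i j) c

lemma MDiffAt_mdz {F : ℂ → Matrix n m ℂ} (hF : ∀ i j, ContDiffAt ℝ (⊤ : ℕ∞) (fun w => F w i j) z) :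
    MDiffAt (fun w => mdz F w) z := fun i j => wdz_diffAt (hF i j)

lemma MDiffAt_mdzbar {F : ℂ → Matrix n m ℂ} (hF : ∀ i j, ContDiffAt ℝ (⊤ : ℕ∞) (fun w => F w i j) z) :
    MDiffAt (fun w => mdzbar F w) z := fun i j => wdzbar_diffAt (hF i j)

lemma mdz_mdzbar_comm {F : ℂ → Matrix n m ℂ}
    (hF : ∀ i j, ContDiffAt ℝ (⊤ : ℕ∞) (fun w => F w i j) z) :
    mdz (fun w => mdzbar F w) z = mdzbar (fun w => mdz F w) z := by
  ext i j
  exact wdz_wdzbar_comm (hF i j)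

end matrixlemmas

/-- A matrix-valued function is smooth on a set if each entry is `C^∞`
as a function of the two real variables. -/
def MSmoothOn {n m : Type*} (F : ℂ → Matrix n m ℂ) (Ω : Set ℂ) : Prop :=
  ∀ i j, ContDiffOn ℝ (⊤ : ℕ∞) (fun z => F z i j) Ω

/-- for a smooth unitary-matrix-valued `h` on an open `Ω ⊆ ℂ`, with
`χ := ½ h⁻¹ ∂_z h`, the harmonic map equation `∂_z(h⁻¹∂_z̄h) + ∂_z̄(h⁻¹∂_zh) = 0`
holds on `Ω` iff `∂_z̄ χ = [χᴴ, χ]` holds on `Ω`. -/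
theorem stmt6 {N : Type*} [Fintype N] [DecidableEq N]
    (Ω : Set ℂ) (hΩ : IsOpen Ω) (h : ℂ → Matrix N N ℂ)
    (hsm : MSmoothOn h Ω) (hunit : ∀ z ∈ Ω, (h z)ᴴ * h z = 1)
    (χ : ℂ → Matrix N N ℂ)
    (hχ : ∀ z, χ z = (1 / 2 : ℂ) • ((h z)⁻¹ * mdz h z)) :
    (∀ z ∈ Ω,
        mdz (fun w => (h w)⁻¹ * mdzbar h w) z
          + mdzbar (fun w => (h w)⁻¹ * mdz h w) z = 0)
      ↔ (∀ z ∈ Ω, mdzbar χ z = (χ z)ᴴ * χ z - χ z * (χ z)ᴴ) := by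
  have key : ∀ z ∈ Ω,
      mdzbar χ z - ((χ z)ᴴ * χ z - χ z * (χ z)ᴴ)
        = (1/4 : ℂ) • (mdz (fun w => (h w)⁻¹ * mdzbar h w) z
            + mdzbar (fun w => (h w)⁻¹ * mdz h w) z) := by
    intro z hz
    have hmem : Ω ∈ nhds z := hΩ.mem_nhds hz
    have hinv : ∀ w ∈ Ω, (h w)⁻¹ = (h w)ᴴ := fun w hw => Matrix.inv_eq_left_inv (hunit w hw)
    have hc : ∀ i j, ContDiffAt ℝ (⊤ : ℕ∞) (fun w => h w i j) z := fun i j => (hsm i j).contDiffAt hmem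
    have dh : MDiffAt h z := fun i j => (hc i j).differentiableAt (by simp)
    have dhH : MDiffAt (fun w => (h w)ᴴ) z := dh.conjT
    have dP : MDiffAt (fun w => mdz h w) z := MDiffAt_mdz hc
    have dQ : MDiffAt (fun w => mdzbar h w) z := MDiffAt_mdzbar hc
    have hHHs : h z * (h z)ᴴ = 1 := mul_eq_one_comm.mpr (hunit z hz)
    -- derivatives of the unitarity relation
    have e0 : (fun w => (h w)ᴴ * h w) =ᶠ[nhds z] (fun _ => (1 : Matrix N N ℂ)) :=
      Filter.eventually_of_mem hmem fun w hw => hunit w hw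
    have e1 : (mdzbar h z)ᴴ * h z + (h z)ᴴ * mdz h z = 0 := by
      have t := mdz_mul dhH dh
      rw [mdz_conjT dh, mdz_congr e0, mdz_const] at t
      exact t.symm
    have e2 : (mdz h z)ᴴ * h z + (h z)ᴴ * mdzbar h z = 0 := by
      have t := mdzbar_mul dhH dh
      rw [mdzbar_conjT dh, mdzbar_congr e0, mdzbar_const] at t
      exact t.symm
    have q1 : (h z)ᴴ * mdz h z = -((mdzbar h z)ᴴ * h z) := eq_neg_of_add_eq_zero_right e1
    have q2 : (mdz h z)ᴴ * h z = -((h z)ᴴ * mdzbar h z) := eq_neg_of_add_eq_zero_left e2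
    -- first term of the harmonic map operator
    have ev1 : (fun w => (h w)⁻¹ * mdzbar h w) =ᶠ[nhds z]
        (fun w => (h w)ᴴ * mdzbar h w) :=
      Filter.eventually_of_mem hmem fun w hw => by simp only [hinv w hw]
    have t1 : mdz (fun w => (h w)⁻¹ * mdzbar h w) z
        = (mdzbar h z)ᴴ * mdzbar h z + (h z)ᴴ * mdzbar (fun w => mdz h w) z := by
      rw [mdz_congr ev1, mdz_mul dhH dQ, mdz_conjT dh, mdz_mdzbar_comm hc]
    -- second term
    have ev2 : (fun w => (h w)⁻¹ * mdz h w) =ᶠ[nhds z]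
        (fun w => (h w)ᴴ * mdz h w) :=
      Filter.eventually_of_mem hmem fun w hw => by simp only [hinv w hw]
    have t2 : mdzbar (fun w => (h w)⁻¹ * mdz h w) z
        = (mdz h z)ᴴ * mdz h z + (h z)ᴴ * mdzbar (fun w => mdz h w) z := by
      rw [mdzbar_congr ev2, mdzbar_mul dhH dP, mdzbar_conjT dh]
    -- χ and its derivative
    have evχ : χ =ᶠ[nhds z] (fun w => (1/2 : ℂ) • ((h w)ᴴ * mdz h w)) :=
      Filter.eventually_of_mem hmem fun w hw => by rw [hχ w, hinv w hw]
    have t4 : χ z = (1/2 : ℂ) • ((h z)ᴴ * mdz h z) := by rw [hχ z, hinv z hz]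
    have t3 : mdzbar χ z = (1/2 : ℂ) •
        ((mdz h z)ᴴ * mdz h z + (h z)ᴴ * mdzbar (fun w => mdz h w) z) := by
      rw [mdzbar_congr evχ, mdzbar_smul (dhH.mul dP), mdzbar_mul dhH dP, mdzbar_conjT dh]
    have c1 : (χ z)ᴴ = (1/2 : ℂ) • ((mdz h z)ᴴ * h z) := by
      rw [t4, Matrix.conjTranspose_smul, Matrix.conjTranspose_mul,
        Matrix.conjTranspose_conjTranspose]
      congr 1
      simp [Complex.ext_iff]
    -- the two quadratic products
    have p1 : (mdz h z)ᴴ * h z * ((h z)ᴴ * mdz h z) = (mdz h z)ᴴ * mdz h z := by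
      rw [Matrix.mul_assoc, ← Matrix.mul_assoc (h z), hHHs, Matrix.one_mul]
    have p2 : (h z)ᴴ * mdz h z * ((mdz h z)ᴴ * h z) = (mdzbar h z)ᴴ * mdzbar h z := by
      rw [q1, q2, neg_mul_neg, Matrix.mul_assoc, ← Matrix.mul_assoc (h z), hHHs,
        Matrix.one_mul]
    rw [t1, t2, t3, c1, t4, smul_mul_assoc, smul_mul_assoc, mul_smul_comm, mul_smul_comm,
      smul_smul, smul_smul, p1, p2]
    module
  constructor
  · intro H z hz
    have k := key z hz
    rw [H z hz, smul_zero, sub_eq_zero] at k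
    exact k
  · intro H z hz
    have k := key z hz
    rw [H z hz, sub_self] at k
    have k2 : mdz (fun w => (h w)⁻¹ * mdzbar h w) z
        + mdzbar (fun w => (h w)⁻¹ * mdz h w) z
        = (4 : ℂ) • ((1/4 : ℂ) • (mdz (fun w => (h w)⁻¹ * mdzbar h w) z
            + mdzbar (fun w => (h w)⁻¹ * mdz h w) z)) := by
      rw [smul_smul]; norm_num
    rw [← k, smul_zero] at k2
    exact k2
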